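/- arXiv:math/9804023 — 3 statements merged into one kernel-verified Lean document; each statement's English description precedes it below -/
import Mathlib

section
/- For all integers n ≥ 2, 2·Γ((n+3)/2)·(n-2)!·n! / (√π·Γ((n+2)/2)·(2n-1)!) > 4^(-n). -/
open Real

lemma gamma_midpoint_sq_le {x : ℝ} (hx : 0 < x) :
    Real.Gamma (x + 1/2) ^ 2 ≤ Real.Gamma x * Real.Gamma (x + 1) := by
  have h := Real.convexOn_log_Gamma.2 (Set.mem_Ioi.mpr hx)
    (Set.mem_Ioi.mpr (by linarith : (0:ℝ) < x + 1))
    (by norm_num : (0:ℝ) ≤ 1/2) (by norm_num : (0:ℝ) ≤ 1/2) (by norm_num)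
  simp only [smul_eq_mul, Function.comp] at h
  rw [show (1/2:ℝ)*x + (1/2)*(x+1) = x + 1/2 by ring] at h
  have p1 : 0 < Real.Gamma x := Real.Gamma_pos_of_pos hx
  have p2 : 0 < Real.Gamma (x+1) := Real.Gamma_pos_of_pos (by linarith)
  have p3 : 0 < Real.Gamma (x+1/2) := Real.Gamma_pos_of_pos (by linarith)
  have h2 : Real.exp (Real.log (Real.Gamma (x+1/2)) + Real.log (Real.Gamma (x+1/2)))
      ≤ Real.exp (Real.log (Real.Gamma x) + Real.log (Real.Gamma (x+1))) :=
    Real.exp_le_exp.mpr (by linarith)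
  rw [Real.exp_add, Real.exp_add, Real.exp_log p1, Real.exp_log p2, Real.exp_log p3] at h2
  nlinarith [h2]

set_option maxHeartbeats 1000000 in
theorem f_gt_four_pow_neg (n : ℕ) (hn : 2 ≤ n) :
    2 * Real.Gamma (((n : ℝ) + 3) / 2) * (n - 2).factorial * n.factorial /
        (Real.sqrt π * Real.Gamma (((n : ℝ) + 2) / 2) * (2 * n - 1).factorial) >
      (4 : ℝ) ^ (-(n : ℤ)) := by
  set a : ℝ := (n : ℝ) with ha_def
  have ha : (2:ℝ) ≤ a := by rw [ha_def]; exact_mod_cast hn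
  set q : ℝ := (4 : ℝ) ^ (-(n : ℤ)) with hq_def
  have hq : 0 < q := by positivity
  -- Gamma values
  have hA : 0 < Real.Gamma ((a+1)/2) := Real.Gamma_pos_of_pos (by linarith)
  have hB : 0 < Real.Gamma ((a+2)/2) := Real.Gamma_pos_of_pos (by linarith)
  have hC : 0 < Real.Gamma ((a+3)/2) := Real.Gamma_pos_of_pos (by linarith)
  have hE : 0 < Real.Gamma a := Real.Gamma_pos_of_pos (by linarith)
  have hF : 0 < Real.Gamma (a + 1/2) := Real.Gamma_pos_of_pos (by linarith)
  have hG : 0 < Real.Gamma (a + 1) := Real.Gamma_pos_of_pos (by linarith)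
  -- recurrences
  have hCrec : Real.Gamma ((a+3)/2) = (a+1)/2 * Real.Gamma ((a+1)/2) := by
    rw [show (a+3)/2 = (a+1)/2 + 1 by ring, Real.Gamma_add_one (by positivity)]
  have hGrec : Real.Gamma (a + 1) = a * Real.Gamma a :=
    Real.Gamma_add_one (by positivity)
  -- midpoint bounds
  have hmid1 : Real.Gamma ((a+2)/2) ^ 2 ≤ Real.Gamma ((a+1)/2) * Real.Gamma ((a+3)/2) := by
    have := gamma_midpoint_sq_le (x := (a+1)/2) (by positivity)
    rw [show (a+1)/2 + 1/2 = (a+2)/2 by ring, show (a+1)/2 + 1 = (a+3)/2 by ring] at this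
    exact this
  have hmid2 : Real.Gamma (a + 1/2) ^ 2 ≤ Real.Gamma a * Real.Gamma (a + 1) :=
    gamma_midpoint_sq_le (by positivity)
  have hC2 : (a+1)/2 * Real.Gamma ((a+2)/2) ^ 2 ≤ Real.Gamma ((a+3)/2) ^ 2 := by
    nlinarith [hmid1, hCrec, hC, hA]
  have hG2 : a * Real.Gamma (a + 1/2) ^ 2 ≤ Real.Gamma (a + 1) ^ 2 := by
    nlinarith [hmid2, hGrec, hG, hE]
  -- main inequality : (a-1) * (B*F) < 4 * (C*G)
  have hmain : (a - 1) * (Real.Gamma ((a+2)/2) * Real.Gamma (a + 1/2))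
      < 4 * (Real.Gamma ((a+3)/2) * Real.Gamma (a + 1)) := by
    have hsq : ((a - 1) * (Real.Gamma ((a+2)/2) * Real.Gamma (a + 1/2))) ^ 2
        < (4 * (Real.Gamma ((a+3)/2) * Real.Gamma (a + 1))) ^ 2 := by
      have hmul : ((a+1)/2 * Real.Gamma ((a+2)/2) ^ 2) * (a * Real.Gamma (a + 1/2) ^ 2)
          ≤ Real.Gamma ((a+3)/2) ^ 2 * Real.Gamma (a + 1) ^ 2 :=
        mul_le_mul hC2 hG2 (by positivity) (by positivity)
      nlinarith [hmul, sq_nonneg (Real.Gamma ((a+2)/2) * Real.Gamma (a + 1/2)),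
        mul_pos hB hF, ha]
    exact lt_of_pow_lt_pow_left₀ 2 (by positivity) hsq
  -- cast facts
  have hfac2 : ((2 * n - 1).factorial : ℝ) = Real.Gamma (2 * a) := by
    have h1 : ((2 * n - 1 : ℕ) : ℝ) + 1 = 2 * a := by
      have : (2 * n - 1 : ℕ) = 2 * n - 1 := rfl
      rw [ha_def]
      push_cast [Nat.cast_sub (by omega : 1 ≤ 2 * n)]
      ring
    rw [← h1, Real.Gamma_nat_eq_factorial]
  have hfacn : (n.factorial : ℝ) = Real.Gamma (a + 1) := by
    rw [ha_def, Real.Gamma_nat_eq_factorial]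
  have hfacE : Real.Gamma a = (a - 1) * ((n - 2).factorial : ℝ) := by
    have h1 : a = ((n - 2 : ℕ) : ℝ) + 1 + 1 := by
      rw [ha_def]; push_cast [Nat.cast_sub (by omega : 2 ≤ n)]; ring
    have h2 : Real.Gamma a = (((n-2:ℕ):ℝ) + 1) * Real.Gamma (((n-2:ℕ):ℝ) + 1) := by
      rw [h1, Real.Gamma_add_one (by positivity)]
    rw [h2, Real.Gamma_nat_eq_factorial]
    have : ((n-2:ℕ):ℝ) + 1 = a - 1 := by
      rw [ha_def]; push_cast [Nat.cast_sub (by omega : 2 ≤ n)]; ring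
    rw [this]
  -- duplication formula
  have hdup : Real.Gamma a * Real.Gamma (a + 1/2)
      = Real.Gamma (2 * a) * (2:ℝ) ^ ((1:ℝ) - 2 * a) * Real.sqrt π :=
    Real.Gamma_mul_Gamma_add_half a
  have hpow : (2:ℝ) ^ ((1:ℝ) - 2 * a) = 2 * q := by
    rw [show (1:ℝ) - 2 * a = ((1 - 2 * (n:ℤ) : ℤ) : ℝ) by rw [ha_def]; push_cast; ring,
      Real.rpow_intCast, hq_def, show (4:ℝ) = (2:ℝ) ^ (2:ℤ) by norm_num, ← zpow_mul]
    rw [show (1 - 2 * (n:ℤ)) = 1 + (2 * -(n:ℤ)) by ring, zpow_add₀ (two_ne_zero), zpow_one]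
  have hG2a : 0 < Real.Gamma (2 * a) := Real.Gamma_pos_of_pos (by linarith)
  have hpi : 0 < Real.sqrt π := Real.sqrt_pos.mpr Real.pi_pos
  -- denominator positivity
  have hD : 0 < Real.sqrt π * Real.Gamma ((a+2)/2) * ((2 * n - 1).factorial : ℝ) := by
    positivity
  rw [gt_iff_lt, lt_div_iff₀ hD]
  have hK : (0:ℝ) < ((n - 2).factorial : ℝ) := by positivity
  have lhs_eq : q * (Real.sqrt π * Real.Gamma ((a+2)/2) * ((2 * n - 1).factorial : ℝ))
      = Real.Gamma a * Real.Gamma (a + 1/2) * Real.Gamma ((a+2)/2) / 2 := by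
    rw [hfac2]
    rw [hdup, hpow]
    field_simp
  rw [lhs_eq, hfacn, hfacE]
  nlinarith [mul_lt_mul_of_pos_right hmain hK, hK, hB, hF, hC, hG]
end

section
/- Let K be a symmetric convex body in a finite-dimensional real vector space V and W ⊆ V a linear subspace. Then the polar dual (within W) of the slice K ∩ W equals the image of the polar dual K° ⊆ V* under the restriction map V* → W*; i.e., slices of K are dual to projections of K°. -/
open Pointwise


/-- The polar dual of a set, inside the dual space. -/
def dualPolar {V : Type*} [AddCommGroup V] [Module ℝ V] (S : Set V) :
    Set (Module.Dual ℝ V) :=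
  {y | ∀ x ∈ S, |y x| ≤ 1}

/-- Slices are dual to projections: for a symmetric convex body `K` in a finite-dimensional
real vector space `V` and a subspace `W ⊆ V`, the polar dual (within `W`) of the slice `K ∩ W`
is the image of the polar dual `K° ⊆ V*` under the restriction map `V* → W*`. -/
theorem polar_of_slice_eq_projection_of_polar
    {V : Type*} [NormedAddCommGroup V] [NormedSpace ℝ V] [FiniteDimensional ℝ V]
    (K : Set V)
    (hKconv : Convex ℝ K) (hKcomp : IsCompact K) (hKint : (interior K).Nonempty)
    (hKsymm : ∀ x ∈ K, -x ∈ K)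
    (W : Submodule ℝ V) :
    dualPolar ((↑) ⁻¹' K : Set ↥W) = W.subtype.dualMap '' dualPolar K := by
  -- 0 is an interior point of K
  obtain ⟨x₀, hx₀⟩ := hKint
  have hx₀' : -x₀ ∈ interior K := by
    have h1 : -x₀ ∈ interior ((-1 : ℝ) • K) := by
      rw [interior_smul₀ (by norm_num : (-1:ℝ) ≠ 0)]
      exact ⟨x₀, hx₀, by simp⟩
    exact interior_mono (fun z hz => by
      obtain ⟨w, hw, rfl⟩ := hz
      simpa using hKsymm w hw) h1
  have h0 : (0 : V) ∈ interior K := by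
    have := (hKconv.interior) hx₀ hx₀' (by norm_num : (0:ℝ) ≤ 1/2)
      (by norm_num : (0:ℝ) ≤ 1/2) (by norm_num)
    simpa using this
  have habs : Absorbent ℝ K := absorbent_nhds_zero (mem_interior_iff_mem_nhds.1 h0)
  apply Set.Subset.antisymm
  · -- hard direction: extend y : W →ₗ ℝ via Hahn-Banach with the gauge of K
    intro y hy
    have hle : ∀ x : W, (LinearPMap.mk W y) x ≤ gauge K (x : V) := by
      rintro ⟨x, hxW⟩
      refine le_csInf habs.gauge_set_nonempty ?_
      rintro r ⟨hr, hxr⟩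
      obtain ⟨k, hk, rfl⟩ := hxr
      have hkW : k ∈ W := by
        have : r⁻¹ • (r • k) ∈ W := W.smul_mem _ hxW
        rwa [inv_smul_smul₀ (ne_of_gt hr)] at this
      have h1 : |y ⟨k, hkW⟩| ≤ 1 := hy ⟨k, hkW⟩ hk
      have : (LinearPMap.mk W y) ⟨r • k, hxW⟩ = r * y ⟨k, hkW⟩ := by
        have : (⟨r • k, hxW⟩ : W) = r • (⟨k, hkW⟩ : W) := rfl
        rw [this, LinearPMap.mk_apply, map_smul, smul_eq_mul]
      rw [this]
      calc r * y ⟨k, hkW⟩ ≤ r * 1 := by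
            exact mul_le_mul_of_nonneg_left (le_trans (le_abs_self _) h1) hr.le
        _ = r := mul_one r
    obtain ⟨g, hg, hgle⟩ := exists_extension_of_le_sublinear (LinearPMap.mk W y)
      (gauge K)
      (fun c hc x => by rw [gauge_smul_of_nonneg hc.le, smul_eq_mul])
      (gauge_add_le hKconv habs)
      hle
    refine ⟨g, ?_, ?_⟩
    · intro v hv
      have h1 : g v ≤ 1 := (hgle v).trans (gauge_le_one_of_mem hv)
      have h2 : g (-v) ≤ 1 := (hgle (-v)).trans (gauge_le_one_of_mem (hKsymm v hv))
      rw [map_neg] at h2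
      exact abs_le.2 ⟨by linarith, h1⟩
    · ext w
      simpa using hg w
  · rintro _ ⟨g, hg, rfl⟩ x hx
    exact hg x hx
end

section
/- Let K' be a symmetric convex body in an (n+1)-dimensional Euclidean space V', let p ∈ K' maximize Euclidean norm with s = ‖p‖, let V'' be the hyperplane orthogonal to p, and K'' = K' ∩ V''. Then ∫_{K'} ‖x‖₂^(n-1) dx ≥ Vol(K'')·sⁿ·2·(n-1)!·n!/(2n)!. -/
/-!
The double cone `conv (K'' ∪ {p, -p})` lies in `K'` by convexity and symmetry. In the
coordinates `x = (t / s) • p + y` with `y ⊥ p`, in which the volume of the whole space is the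
product of the volumes of `ℝ` and `(ℝ ∙ p)ᗮ`, the slice of the double cone at height `t` is
`(1 - |t| / s) • K''`, of volume `(1 - |t| / s) ^ n * Vol(K'')`, and `‖x‖ ≥ |t|`. Hence the
integral is at least `Vol(K'') * ∫ t in -s..s, |t| ^ (n - 1) * (1 - |t| / s) ^ n`, a Beta
integral equal to `Vol(K'') * 2 * s ^ n * (n - 1)! * n! / (2 * n)!`.
-/

open MeasureTheory Set
open scoped Nat Pointwise ENNReal

theorem integral_pow_mul_one_sub_pow (a b : ℕ) :
    ∫ x in (0 : ℝ)..1, x ^ a * (1 - x) ^ b = a ! * b ! / (a + b + 1)! := by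
  induction b generalizing a with
  | zero =>
    simp [integral_pow, Nat.factorial_succ]
    field_simp
  | succ b ih =>
    have hsplit (x : ℝ) :
        x ^ a * (1 - x) ^ (b + 1) = x ^ a * (1 - x) ^ b - x ^ (a + 1) * (1 - x) ^ b := by
      ring
    simp_rw [hsplit]
    rw [intervalIntegral.integral_sub (Continuous.intervalIntegrable (by fun_prop) _ _)
      (Continuous.intervalIntegrable (by fun_prop) _ _), ih, ih,
      show a + 1 + b + 1 = a + b + 1 + 1 by ring, show a + (b + 1) + 1 = a + b + 1 + 1 by ring]
    simp only [Nat.factorial_succ]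
    push_cast
    field_simp
    ring

theorem integral_abs_pow_mul_one_sub_abs_div_pow (a b : ℕ) {s : ℝ} (hs : 0 < s) :
    ∫ t in -s..s, |t| ^ a * (1 - |t| / s) ^ b = 2 * s ^ (a + 1) * (a ! * b ! / (a + b + 1)!) := by
  set f : ℝ → ℝ := fun t ↦ |t| ^ a * (1 - |t| / s) ^ b
  have hf : Continuous f := by fun_prop
  have hneg : ∫ t in -s..0, f t = ∫ t in 0..s, f t := by
    simpa [f] using (intervalIntegral.integral_comp_neg (a := 0) (b := s) f).symm
  have hpos : ∫ t in 0..s, f t = s ^ (a + 1) * (a ! * b ! / (a + b + 1)!) := by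
    have hscale := intervalIntegral.mul_integral_comp_mul_left (a := 0) (b := 1) (f := f) s
    rw [mul_zero, mul_one] at hscale
    have hsub : EqOn (fun x ↦ f (s * x)) (fun x ↦ s ^ a * (x ^ a * (1 - x) ^ b)) (uIcc 0 1) := by
      intro x hx
      rw [uIcc_of_le zero_le_one] at hx
      simp only [f, abs_mul, abs_of_pos hs, abs_of_nonneg hx.1]
      field_simp
      ring
    rw [← hscale, intervalIntegral.integral_congr hsub, intervalIntegral.integral_const_mul,
      integral_pow_mul_one_sub_pow]
    ring
  rw [← intervalIntegral.integral_add_adjacent_intervals (hf.intervalIntegrable _ 0)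
    (hf.intervalIntegrable 0 _), hneg, hpos]
  ring

theorem one_sub_abs_div_nonneg {t s : ℝ} (ht : |t| ≤ s) : 0 ≤ 1 - |t| / s :=
  sub_nonneg.2 (div_le_one_of_le₀ ht ((abs_nonneg t).trans ht))

theorem ofReal_integral_abs_pow_mul_one_sub_abs_div_pow (a b : ℕ) {s : ℝ} (hs : 0 ≤ s) :
    ENNReal.ofReal (∫ t in -s..s, |t| ^ a * (1 - |t| / s) ^ b) =
      ∫⁻ t in Icc (-s) s, ENNReal.ofReal (|t| ^ a) * ENNReal.ofReal ((1 - |t| / s) ^ b) := by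
  rw [intervalIntegral.integral_of_le (by linarith), ← integral_Icc_eq_integral_Ioc,
    ofReal_integral_eq_lintegral_ofReal (Continuous.integrableOn_Icc (by fun_prop))]
  · refine setLIntegral_congr_fun measurableSet_Icc fun t _ ↦ ENNReal.ofReal_mul (by positivity)
  · refine ae_restrict_of_forall_mem measurableSet_Icc fun t ht ↦ ?_
    have := one_sub_abs_div_nonneg (abs_le.2 ht)
    positivity

section DoubleCone

variable {H : Type*} [NormedAddCommGroup H] [NormedSpace ℝ H]

def doubleCone (A : Set H) (s : ℝ) : Set (ℝ × H) :=
  {q | |q.1| ≤ s ∧ q.2 ∈ (1 - |q.1| / s) • A}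

theorem doubleCone_eq_image (A : Set H) (s : ℝ) :
    doubleCone A s = (fun q : ℝ × H ↦ (q.1, (1 - |q.1| / s) • q.2)) '' Icc (-s) s ×ˢ A := by
  ext ⟨t, y⟩
  simp [doubleCone, mem_smul_set, abs_le, and_assoc]

theorem IsCompact.doubleCone {A : Set H} (hA : IsCompact A) (s : ℝ) :
    IsCompact (doubleCone A s) := by
  rw [doubleCone_eq_image]
  exact (isCompact_Icc.prod hA).image (by fun_prop)

variable [MeasurableSpace H] [BorelSpace H] [FiniteDimensional ℝ H]
  (μ : Measure H) [μ.IsAddHaarMeasure] {A : Set H} {s : ℝ} {g : ℝ → ℝ≥0∞}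

theorem lintegral_indicator_doubleCone_slice (hA : IsCompact A) (t : ℝ) :
    ∫⁻ y, (doubleCone A s).indicator (fun q ↦ g q.1) (t, y) ∂μ =
      (Icc (-s) s).indicator
        (fun t ↦ g t * ENNReal.ofReal ((1 - |t| / s) ^ Module.finrank ℝ H) * μ A) t := by
  by_cases ht : |t| ≤ s
  · have hslice : (fun y ↦ (doubleCone A s).indicator (fun q ↦ g q.1) (t, y)) =
        ((1 - |t| / s) • A).indicator (fun _ ↦ g t) := by
      ext y
      by_cases hy : y ∈ (1 - |t| / s) • A <;> simp [doubleCone, ht, hy]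
    have hmeas : MeasurableSet ((1 - |t| / s) • A) := by
      rw [← image_smul]
      exact (hA.image (continuous_const_smul _)).measurableSet
    rw [hslice, lintegral_indicator_const hmeas,
      Measure.addHaar_smul_of_nonneg μ (one_sub_abs_div_nonneg ht),
      indicator_of_mem (mem_Icc.2 (abs_le.1 ht)), mul_assoc]
  · have hslice : (fun y ↦ (doubleCone A s).indicator (fun q ↦ g q.1) (t, y)) = fun _ ↦ 0 := by
      ext y
      simp [doubleCone, ht]
    rw [hslice, lintegral_zero, indicator_of_notMem (fun h ↦ ht (abs_le.2 (mem_Icc.1 h)))]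

theorem setLIntegral_doubleCone (ν : Measure ℝ) [SFinite ν] (hA : IsCompact A)
    (hg : Measurable g) :
    ∫⁻ q in doubleCone A s, g q.1 ∂ν.prod μ =
      (∫⁻ t in Icc (-s) s, g t * ENNReal.ofReal ((1 - |t| / s) ^ Module.finrank ℝ H) ∂ν) *
        μ A := by
  have hmeas := (hA.doubleCone s).measurableSet
  have hf : Measurable ((doubleCone A s).indicator fun q : ℝ × H ↦ g q.1) :=
    (hg.comp measurable_fst).indicator hmeas
  rw [← lintegral_indicator hmeas, lintegral_prod _ hf.aemeasurable]
  simp_rw [lintegral_indicator_doubleCone_slice μ hA]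
  rw [lintegral_indicator measurableSet_Icc, lintegral_mul_const]
  exact hg.mul (by fun_prop)

end DoubleCone

theorem Convex.smul_add_one_sub_abs_smul_mem {V : Type*} [AddCommGroup V] [Module ℝ V]
    {K : Set V} (hK : Convex ℝ K) (hsymm : ∀ x ∈ K, -x ∈ K) {p y : V} (hp : p ∈ K)
    (hy : y ∈ K) {c : ℝ} (hc : |c| ≤ 1) : c • p + (1 - |c|) • y ∈ K := by
  rcases le_or_gt 0 c with h | h
  · rw [abs_of_nonneg h] at hc ⊢
    exact hK hp hy h (by linarith) (by ring)
  · rw [abs_of_neg h] at hc ⊢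
    convert hK (hsymm p hp) hy (neg_nonneg.2 h.le) (by linarith : 0 ≤ 1 - -c) (by ring) using 2
    rw [smul_neg, neg_smul, neg_neg]

section LineOrthogonal

variable {E : Type*} [NormedAddCommGroup E] [InnerProductSpace ℝ E] {p : E}

noncomputable def lineIsometry (hp : p ≠ 0) : ℝ ≃ₗᵢ[ℝ] ℝ ∙ p :=
  (LinearIsometryEquiv.toSpanUnitSingleton (‖p‖⁻¹ • p) (by simp [norm_smul, hp])).trans
    (LinearIsometryEquiv.ofEq _ _ (Submodule.span_singleton_smul_eq (by simpa using hp) p))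

theorem coe_lineIsometry (hp : p ≠ 0) (t : ℝ) : (lineIsometry hp t : E) = (t / ‖p‖) • p := by
  simp [lineIsometry, smul_smul, div_eq_mul_inv]

noncomputable def lineOrthogonalSum (p : E) (q : ℝ × (ℝ ∙ p)ᗮ) : E :=
  (q.1 / ‖p‖) • p + q.2

theorem lineOrthogonalSum_eq (hp : p ≠ 0) :
    lineOrthogonalSum p =
      (ℝ ∙ p).orthogonalDecomposition.symm ∘ WithLp.toLp 2 ∘ Prod.map (lineIsometry hp) id := by
  ext q
  simp [lineOrthogonalSum, coe_lineIsometry]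

theorem abs_fst_le_norm_lineOrthogonalSum (hp : p ≠ 0) (q : ℝ × (ℝ ∙ p)ᗮ) :
    |q.1| ≤ ‖lineOrthogonalSum p q‖ := by
  calc |q.1| = ‖lineIsometry hp q.1‖ := by simp
    _ ≤ ‖WithLp.toLp 2 (lineIsometry hp q.1, q.2)‖ := by
      simpa using WithLp.norm_fst_le _ (WithLp.toLp 2 (lineIsometry hp q.1, q.2))
    _ = ‖lineOrthogonalSum p q‖ := by
      rw [lineOrthogonalSum_eq hp, Function.comp_apply, LinearIsometryEquiv.norm_map]
      rfl

theorem mapsTo_lineOrthogonalSum_doubleCone {K : Set E} (hK : Convex ℝ K)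
    (hsymm : ∀ x ∈ K, -x ∈ K) (hp : p ∈ K) :
    MapsTo (lineOrthogonalSum p) (doubleCone ((↑) ⁻¹' K : Set (ℝ ∙ p)ᗮ) ‖p‖) K := by
  rintro ⟨t, z⟩ ⟨ht, y, hy, hyz : (1 - |t| / ‖p‖) • y = z⟩
  subst hyz
  have hc : |t / ‖p‖| = |t| / ‖p‖ := by rw [abs_div, abs_norm]
  have hmem := hK.smul_add_one_sub_abs_smul_mem hsymm hp hy
    (by rw [hc]; exact div_le_one_of_le₀ ht (norm_nonneg p))
  rw [hc] at hmem
  simpa [lineOrthogonalSum] using hmem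

variable [FiniteDimensional ℝ E] [MeasurableSpace E] [BorelSpace E]

theorem measurePreserving_lineOrthogonalSum (hp : p ≠ 0) :
    MeasurePreserving (lineOrthogonalSum p) := by
  rw [lineOrthogonalSum_eq hp]
  exact (LinearIsometryEquiv.measurePreserving _).comp <|
    (WithLp.volume_preserving_toLp _ _).comp <|
      (LinearIsometryEquiv.measurePreserving _).prod (MeasurePreserving.id _)

theorem setLIntegral_doubleCone_le_setLIntegral_norm_pow {K : Set E} (hK : Convex ℝ K)
    (hKcomp : IsCompact K) (hsymm : ∀ x ∈ K, -x ∈ K) (hp : p ∈ K) (hp0 : p ≠ 0) (k : ℕ) :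
    ∫⁻ q in doubleCone ((↑) ⁻¹' K : Set (ℝ ∙ p)ᗮ) ‖p‖, ENNReal.ofReal (|q.1| ^ k) ≤
      ∫⁻ x in K, ENNReal.ofReal (‖x‖ ^ k) := by
  have hF := measurePreserving_lineOrthogonalSum hp0
  calc ∫⁻ q in doubleCone _ ‖p‖, ENNReal.ofReal (|q.1| ^ k)
      ≤ ∫⁻ q in doubleCone _ ‖p‖, ENNReal.ofReal (‖lineOrthogonalSum p q‖ ^ k) := by
        refine setLIntegral_mono (by have := hF.measurable; fun_prop) fun q _ ↦ ?_
        exact ENNReal.ofReal_le_ofReal <|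
          pow_le_pow_left₀ (abs_nonneg _) (abs_fst_le_norm_lineOrthogonalSum hp0 q) k
    _ ≤ ∫⁻ q in lineOrthogonalSum p ⁻¹' K, ENNReal.ofReal (‖lineOrthogonalSum p q‖ ^ k) :=
        lintegral_mono_set (mapsTo_lineOrthogonalSum_doubleCone hK hsymm hp)
    _ = ∫⁻ x in K, ENNReal.ofReal (‖x‖ ^ k) :=
        hF.setLIntegral_comp_preimage hKcomp.measurableSet
          (f := fun x ↦ ENNReal.ofReal (‖x‖ ^ k)) (by fun_prop)

theorem integral_mul_volume_le_setIntegral_norm_pow {K : Set E} (hK : Convex ℝ K)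
    (hKcomp : IsCompact K) (hsymm : ∀ x ∈ K, -x ∈ K) (hp : p ∈ K) (hp0 : p ≠ 0) (k : ℕ) :
    (∫ t in -‖p‖..‖p‖, |t| ^ k * (1 - |t| / ‖p‖) ^ Module.finrank ℝ (ℝ ∙ p)ᗮ) *
        (volume ((↑) ⁻¹' K : Set (ℝ ∙ p)ᗮ)).toReal ≤
      ∫ x in K, ‖x‖ ^ k := by
  have hA : IsCompact ((↑) ⁻¹' K : Set (ℝ ∙ p)ᗮ) :=
    (Submodule.isClosed_orthogonal _).isClosedEmbedding_subtypeVal.isCompact_preimage hKcomp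
  have hle := setLIntegral_doubleCone_le_setLIntegral_norm_pow hK hKcomp hsymm hp hp0 k
  rw [Measure.volume_eq_prod, setLIntegral_doubleCone volume volume hA
      (g := fun t ↦ ENNReal.ofReal (|t| ^ k)) (by fun_prop),
    ← ofReal_integral_abs_pow_mul_one_sub_abs_div_pow _ _ (norm_nonneg p),
    ← ofReal_integral_eq_lintegral_ofReal
      ((by fun_prop : Continuous fun x : E ↦ ‖x‖ ^ k).continuousOn.integrableOn_compact hKcomp)
      (ae_of_all _ fun x ↦ by positivity)] at hle
  have hprofile : 0 ≤ ∫ t in -‖p‖..‖p‖, |t| ^ k * (1 - |t| / ‖p‖) ^ Module.finrank ℝ (ℝ ∙ p)ᗮ :=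
    intervalIntegral.integral_nonneg (by simp) fun t ht ↦ by
      have := one_sub_abs_div_nonneg (abs_le.2 ht)
      positivity
  have hint : 0 ≤ ∫ x in K, ‖x‖ ^ k :=
    setIntegral_nonneg hKcomp.measurableSet fun _ _ ↦ by positivity
  simpa [ENNReal.toReal_mul, hprofile, hint] using ENNReal.toReal_mono ENNReal.ofReal_ne_top hle

end LineOrthogonal

theorem integral_norm_pow_ge_double_cone_general (n : ℕ) (hn : 1 ≤ n)
    (K' : Set (EuclideanSpace ℝ (Fin (n + 1))))
    (hKconv : Convex ℝ K') (hKcomp : IsCompact K')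
    (hKsymm : ∀ x ∈ K', -x ∈ K')
    (p : EuclideanSpace ℝ (Fin (n + 1))) (hp : p ∈ K')
    (s : ℝ) (hs : s = ‖p‖) :
    ∫ x in K', ‖x‖ ^ (n - 1) ≥
      (volume (((↑) ⁻¹' K') : Set ↥(ℝ ∙ p)ᗮ)).toReal * s ^ n *
        (2 * (n - 1).factorial * n.factorial) / (2 * n).factorial := by
  subst hs
  rcases eq_or_ne p 0 with rfl | hp0
  · simpa [zero_pow (by omega : n ≠ 0)] using
      setIntegral_nonneg hKcomp.measurableSet fun x _ ↦ by positivity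
  have hdim : Module.finrank ℝ (ℝ ∙ p)ᗮ = n := by
    have := (ℝ ∙ p).finrank_add_finrank_orthogonal
    rw [finrank_span_singleton hp0, finrank_euclideanSpace_fin] at this
    omega
  have hle := integral_mul_volume_le_setIntegral_norm_pow hKconv hKcomp hKsymm hp hp0 (n - 1)
  rw [hdim, integral_abs_pow_mul_one_sub_abs_div_pow _ _ (norm_pos_iff.2 hp0),
    Nat.sub_add_cancel hn, show n - 1 + n + 1 = 2 * n by omega] at hle
  rw [ge_iff_le]
  convert hle using 1
  ring

/-- Let `K'` be a symmetric convex body in an `(n+1)`-dimensional Euclidean space, `p ∈ K'` of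
maximal Euclidean norm `s`, `V''` the hyperplane orthogonal to `p`, and `K'' = K' ∩ V''`. Then
`∫_{K'} ‖x‖₂^(n-1) dx ≥ Vol(K'')·sⁿ·2·(n-1)!·n!/(2n)!`. -/
theorem integral_norm_pow_ge_double_cone (n : ℕ) (hn : 1 ≤ n)
    (K' : Set (EuclideanSpace ℝ (Fin (n + 1))))
    (hKconv : Convex ℝ K') (hKcomp : IsCompact K') (hKint : (interior K').Nonempty)
    (hKsymm : ∀ x ∈ K', -x ∈ K')
    (p : EuclideanSpace ℝ (Fin (n + 1))) (hp : p ∈ K')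
    (hpmax : ∀ x ∈ K', ‖x‖ ≤ ‖p‖) (s : ℝ) (hs : s = ‖p‖) :
    ∫ x in K', ‖x‖ ^ (n - 1) ≥
      (volume (((↑) ⁻¹' K') : Set ↥(ℝ ∙ p)ᗮ)).toReal * s ^ n *
        (2 * (n - 1).factorial * n.factorial) / (2 * n).factorial :=
  integral_norm_pow_ge_double_cone_general n hn K' hKconv hKcomp hKsymm p hp s hs
end
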